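/- arXiv:1603.03997 — 3 statements merged into one kernel-verified Lean document; each statement's English description precedes it below -/
import Mathlib

section
/- Energy conservation for the Poincaré equations (coordinate version): Let L̂ : ℝⁿ × ℝⁿ → ℝ be smooth (variables (g, ω)), let c_{ij}^k be constants skew-symmetric in (i,j), and let v₁,…,v_n : ℝⁿ → ℝⁿ be smooth vector fields. Suppose a smooth path (g(t), ω(t)) satisfies g'(t) = Σ_k ω_k(t) v_k(g(t)) and (d/dt) ∂L̂/∂ω_k = Σ_{i,j} c_{ik}^j ω_i ∂L̂/∂ω_j + (v_k · ∇_g L̂) for each k. Then the energy E(t) := Σ_k ω_k(t) ∂L̂/∂ω_k(g(t), ω(t)) − L̂(g(t), ω(t)) is constant in t. -/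
/-- Energy conservation for the Poincaré equations (coordinate version).
`Lhat : ℝⁿ × ℝⁿ → ℝ` is a smooth Lagrangian in the Poincaré variables `(g, ω)`,
`Lom k a b` is the partial derivative `∂L̂/∂ω_k` at `(a, b)`, and
`vDL k a b` is the directional derivative of `L̂(·, b)` at `a` along `v_k(a)`.
If the path satisfies `g' = ∑ ω_k v_k(g)` and the Poincaré equations, then the
energy `E = ∑_k ω_k ∂L̂/∂ω_k − L̂` is constant. -/
theorem poincare_energy_conservation {n : ℕ}
    (Lhat : (Fin n → ℝ) → (Fin n → ℝ) → ℝ)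
    (hL : ContDiff ℝ (⊤ : ℕ∞) (fun p : (Fin n → ℝ) × (Fin n → ℝ) => Lhat p.1 p.2))
    (v : Fin n → (Fin n → ℝ) → (Fin n → ℝ))
    (hv : ∀ k, ContDiff ℝ (⊤ : ℕ∞) (v k))
    (c : Fin n → Fin n → Fin n → ℝ)
    (hc : ∀ i j k, c i j k = -(c j i k))
    (Lom : Fin n → (Fin n → ℝ) → (Fin n → ℝ) → ℝ)
    (hLom : ∀ (k : Fin n) (a b : Fin n → ℝ),
      Lom k a b = fderiv ℝ (fun w => Lhat a w) b (Pi.single k 1))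
    (vDL : Fin n → (Fin n → ℝ) → (Fin n → ℝ) → ℝ)
    (hvDL : ∀ (k : Fin n) (a b : Fin n → ℝ),
      vDL k a b = fderiv ℝ (fun x => Lhat x b) a (v k a))
    (g ω ω' : ℝ → Fin n → ℝ)
    (hg : ∀ (t : ℝ) (i : Fin n),
      HasDerivAt (fun s => g s i) (∑ k, ω t k * v k (g t) i) t)
    (hω : ∀ (t : ℝ) (k : Fin n), HasDerivAt (fun s => ω s k) (ω' t k) t)
    (hPoincare : ∀ (k : Fin n) (t : ℝ),
      HasDerivAt (fun s => Lom k (g s) (ω s))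
        ((∑ i, ∑ j, c i k j * ω t i * Lom j (g t) (ω t)) + vDL k (g t) (ω t)) t) :
    ∀ t s : ℝ,
      (∑ k, ω t k * Lom k (g t) (ω t)) - Lhat (g t) (ω t)
        = (∑ k, ω s k * Lom k (g s) (ω s)) - Lhat (g s) (ω s) := by
  classical
  set F : (Fin n → ℝ) × (Fin n → ℝ) → ℝ := fun p => Lhat p.1 p.2 with hFdef
  have hFdiff : Differentiable ℝ F := hL.differentiable (by simp)
  -- partial derivative in the first variable
  have hfst : ∀ (a b u : Fin n → ℝ),
      fderiv ℝ (fun x => Lhat x b) a u = fderiv ℝ F (a, b) (u, 0) := by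
    intro a b u
    have h1 : HasFDerivAt (fun x : Fin n → ℝ => (x, b))
        (ContinuousLinearMap.inl ℝ (Fin n → ℝ) (Fin n → ℝ)) a :=
      hasFDerivAt_prodMk_left a b
    have h2 := (hFdiff (a, b)).hasFDerivAt.comp a h1
    have h3 : fderiv ℝ (fun x => Lhat x b) a
        = (fderiv ℝ F (a, b)).comp (ContinuousLinearMap.inl ℝ _ _) := h2.fderiv
    rw [h3]; rfl
  have hsnd : ∀ (a b w : Fin n → ℝ),
      fderiv ℝ (fun y => Lhat a y) b w = fderiv ℝ F (a, b) (0, w) := by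
    intro a b w
    have h1 : HasFDerivAt (fun y : Fin n → ℝ => (a, y))
        (ContinuousLinearMap.inr ℝ (Fin n → ℝ) (Fin n → ℝ)) b :=
      hasFDerivAt_prodMk_right a b
    have h2 := (hFdiff (a, b)).hasFDerivAt.comp b h1
    have h3 : fderiv ℝ (fun y => Lhat a y) b
        = (fderiv ℝ F (a, b)).comp (ContinuousLinearMap.inr ℝ _ _) := h2.fderiv
    rw [h3]; rfl
  -- derivative of Lhat along the path
  have hLhat : ∀ t : ℝ, HasDerivAt (fun s => Lhat (g s) (ω s))
      ((∑ k, ω t k * vDL k (g t) (ω t)) + ∑ k, ω' t k * Lom k (g t) (ω t)) t := by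
    intro t
    have hpath : HasDerivAt (fun s => (g s, ω s))
        ((fun i => ∑ k, ω t k * v k (g t) i), ω' t) t :=
      HasDerivAt.prodMk (hasDerivAt_pi.mpr (hg t)) (hasDerivAt_pi.mpr (hω t))
    have hcomp := (hFdiff (g t, ω t)).hasFDerivAt.comp_hasDerivAt t hpath
    have hvec : (((fun i => ∑ k, ω t k * v k (g t) i) : Fin n → ℝ), ω' t)
        = ∑ k : Fin n, (ω t k • ((v k (g t), 0) : (Fin n → ℝ) × (Fin n → ℝ))
            + ω' t k • ((0, Pi.single k 1) : (Fin n → ℝ) × (Fin n → ℝ))) := by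
      rw [Prod.ext_iff]
      constructor
      · simp only [Prod.fst_sum, Prod.fst_add, Prod.smul_mk]
        funext i
        simp [Finset.sum_apply]
      · simp only [Prod.snd_sum, Prod.snd_add, Prod.smul_mk]
        funext i
        simp [Finset.sum_apply, Pi.single_apply]
    have hval : fderiv ℝ F (g t, ω t) ((fun i => ∑ k, ω t k * v k (g t) i), ω' t)
        = (∑ k, ω t k * vDL k (g t) (ω t)) + ∑ k, ω' t k * Lom k (g t) (ω t) := by
      rw [hvec, map_sum]
      rw [← Finset.sum_add_distrib]
      congr 1
      funext k
      rw [map_add, map_smul, map_smul]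
      rw [hvDL k (g t) (ω t), hLom k (g t) (ω t), hfst, hsnd]
      simp [smul_eq_mul]
    rw [← hval]
    exact hcomp
  -- derivative of the energy is zero
  have hE : ∀ t : ℝ, HasDerivAt
      (fun s => (∑ k, ω s k * Lom k (g s) (ω s)) - Lhat (g s) (ω s)) 0 t := by
    intro t
    have hsum : HasDerivAt (fun s => ∑ k, ω s k * Lom k (g s) (ω s))
        (∑ k, (ω' t k * Lom k (g t) (ω t)
          + ω t k * ((∑ i, ∑ j, c i k j * ω t i * Lom j (g t) (ω t))
            + vDL k (g t) (ω t)))) t := by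
      apply HasDerivAt.fun_sum
      intro k _
      exact (hω t k).mul (hPoincare k t)
    have hD := hsum.fun_sub (hLhat t)
    refine hD.congr_deriv ?_
    have hskew : (∑ k, ω t k * ∑ i, ∑ j, c i k j * ω t i * Lom j (g t) (ω t)) = 0 := by
      set a : Fin n → Fin n → ℝ := fun k i =>
        ∑ j, ω t k * (c i k j * ω t i * Lom j (g t) (ω t)) with ha
      have hS : (∑ k, ω t k * ∑ i, ∑ j, c i k j * ω t i * Lom j (g t) (ω t))
          = ∑ k, ∑ i, a k i := by
        simp [ha, Finset.mul_sum]
      have hanti : ∀ k i, a k i = -(a i k) := by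
        intro k i
        simp only [ha, ← Finset.sum_neg_distrib]
        apply Finset.sum_congr rfl
        intro j _
        rw [hc i k j]; ring
      have h1 : (∑ k, ∑ i, a k i) = ∑ i, ∑ k, a k i := Finset.sum_comm
      have h2 : (∑ i, ∑ k, a k i) = -∑ i, ∑ k, a i k := by
        rw [← Finset.sum_neg_distrib]
        apply Finset.sum_congr rfl
        intro i _
        rw [← Finset.sum_neg_distrib]
        exact Finset.sum_congr rfl fun k _ => hanti k i
      have : (∑ k, ∑ i, a k i) = 0 := by
        have := h1.trans h2
        linarith [this]
      rw [hS, this]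
    simp only [mul_add, Finset.sum_add_distrib]
    linarith [hskew]
  intro t s
  exact is_const_of_deriv_eq_zero
    (fun x => (hE x).differentiableAt)
    (fun x => (hE x).deriv) t s
end

section
/- Special case of the Poincaré equations for so(3): if L̂ depends only on ω ∈ ℝ³ and (d/dt) ∇_ω L̂(ω(t)) = ω(t) × ∇_ω L̂(ω(t)), then the energy E = ω · ∇_ω L̂(ω) − L̂(ω) is constant along solutions. -/
open Matrix

/-- Energy conservation for the Poincaré equations on `SO(3)` when the Lagrangian
depends only on `ω ∈ ℝ³`: if `(d/dt) ∇L̂(ω(t)) = ω(t) × ∇L̂(ω(t))`, then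
`E = ω · ∇L̂(ω) − L̂(ω)` is constant along solutions. -/
theorem poincare_so3_energy_conservation
    (Lhat : (Fin 3 → ℝ) → ℝ) (hL : ContDiff ℝ (⊤ : ℕ∞) Lhat)
    (gradL : (Fin 3 → ℝ) → (Fin 3 → ℝ))
    (hgrad : ∀ (x : Fin 3 → ℝ) (k : Fin 3),
      gradL x k = fderiv ℝ Lhat x (Pi.single k 1))
    (ω ω' : ℝ → Fin 3 → ℝ)
    (hω : ∀ (t : ℝ) (k : Fin 3), HasDerivAt (fun s => ω s k) (ω' t k) t)
    (hode : ∀ (t : ℝ) (k : Fin 3),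
      HasDerivAt (fun s => gradL (ω s) k) ((ω t ⨯₃ gradL (ω t)) k) t) :
    ∀ t s : ℝ,
      ω t ⬝ᵥ gradL (ω t) - Lhat (ω t) = ω s ⬝ᵥ gradL (ω s) - Lhat (ω s) := by
  set E : ℝ → ℝ := fun t => ω t ⬝ᵥ gradL (ω t) - Lhat (ω t) with hE
  have key : ∀ t : ℝ, HasDerivAt E 0 t := by
    intro t
    -- derivative of ω as a curve in ℝ³
    have hωt : HasDerivAt ω (ω' t) t := hasDerivAt_pi.2 (fun k => hω t k)
    -- derivative of Lhat ∘ ω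
    have hLω : HasDerivAt (fun s => Lhat (ω s)) (fderiv ℝ Lhat (ω t) (ω' t)) t :=
      (hL.differentiable (by simp) (ω t)).hasFDerivAt.comp_hasDerivAt t hωt
    -- derivative of the dot product term
    have hdot : HasDerivAt (fun s => ω s ⬝ᵥ gradL (ω s))
        (∑ k, (ω' t k * gradL (ω t) k + ω t k * (ω t ⨯₃ gradL (ω t)) k)) t := by
      have : ∀ s, ω s ⬝ᵥ gradL (ω s) = ∑ k, ω s k * gradL (ω s) k := by
        intro s; rfl
      simp only [this]
      exact HasDerivAt.fun_sum (fun k _ => (hω t k).mul (hode t k))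
    -- fderiv applied to ω' t expands as a sum
    have hfd : fderiv ℝ Lhat (ω t) (ω' t) = ∑ k, ω' t k * gradL (ω t) k := by
      have hv : ω' t = ∑ k, ω' t k • (Pi.single k 1 : Fin 3 → ℝ) := by
        ext j
        simp [Finset.sum_apply, Pi.single_apply]
      conv_lhs => rw [hv]
      rw [map_sum]
      refine Finset.sum_congr rfl fun k _ => ?_
      rw [_root_.map_smul, hgrad (ω t) k]
      simp [smul_eq_mul]
    have := hdot.fun_sub hLω
    refine this.congr_deriv ?_
    rw [hfd, Finset.sum_add_distrib]
    have : ∑ k, ω t k * (ω t ⨯₃ gradL (ω t)) k = ω t ⬝ᵥ (ω t ⨯₃ gradL (ω t)) := rfl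
    rw [this, dot_self_cross]
    ring
  intro t s
  have : ∀ a b : ℝ, E a = E b := by
    intro a b
    have hdiff : Differentiable ℝ E := fun x => (key x).differentiableAt
    have hderiv : ∀ x, deriv E x = 0 := fun x => (key x).deriv
    exact is_const_of_deriv_eq_zero hdiff hderiv a b
  exact this t s
end

section
/- Noether-type invariant for Poincaré equations (coordinate version): Let L̂ : ℝⁿ × ℝⁿ → ℝ be smooth, v₁,…,v_n smooth vector fields, c_{ij}^k constants with c_{ij}^k = −c_{ji}^k, and w : ℝⁿ → ℝⁿ a smooth 'current'. Suppose a smooth path (g(t), ω(t)) satisfies the Poincaré equations (d/dt) ∂L̂/∂ω_k = Σ_{i,j} c_{ik}^j ω_i ∂L̂/∂ω_j + v_k(g)·∇_g L̂, and suppose the invariance identity 0 = ∇_g L̂ · (Σ_j w_j v_j(g)) + Σ_k ∂L̂/∂ω_k · (Σ_{i,j} c_{ij}^k ω_i w_j(g) + (d/dt) w_k(g(t))) holds along the path. Then the quantity I(t) = Σ_k ∂L̂/∂ω_k(g(t), ω(t)) · w_k(g(t)) is constant in t. -/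
private lemma triple_sum_rotate {n : ℕ} (F : Fin n → Fin n → Fin n → ℝ) :
    ∑ k, ∑ i, ∑ j, F i k j = ∑ k, ∑ i, ∑ j, F i j k := by
  rw [Finset.sum_comm]
  conv_rhs => rw [Finset.sum_comm]
  exact Finset.sum_congr rfl fun i _ => Finset.sum_comm

/-- Noether-type invariant for the Poincaré equations (coordinate version):
if the path satisfies the Poincaré equations and the infinitesimal invariance
identity holds along the path for the current `w`, then
`I(t) = Σ_k ∂L̂/∂ω_k · w_k(g(t))` is constant. -/
theorem poincare_noether_invariant {n : ℕ}
    (Lhat : (Fin n → ℝ) → (Fin n → ℝ) → ℝ)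
    (hL : ContDiff ℝ (⊤ : ℕ∞) (fun p : (Fin n → ℝ) × (Fin n → ℝ) => Lhat p.1 p.2))
    (v : Fin n → (Fin n → ℝ) → (Fin n → ℝ))
    (hv : ∀ k, ContDiff ℝ (⊤ : ℕ∞) (v k))
    (c : Fin n → Fin n → Fin n → ℝ)
    (hc : ∀ i j k, c i j k = -(c j i k))
    (w : (Fin n → ℝ) → Fin n → ℝ)
    (hw : ContDiff ℝ (⊤ : ℕ∞) w)
    (Lom : Fin n → (Fin n → ℝ) → (Fin n → ℝ) → ℝ)
    (hLom : ∀ (k : Fin n) (a b : Fin n → ℝ),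
      Lom k a b = fderiv ℝ (fun u => Lhat a u) b (Pi.single k 1))
    (vDL : Fin n → (Fin n → ℝ) → (Fin n → ℝ) → ℝ)
    (hvDL : ∀ (k : Fin n) (a b : Fin n → ℝ),
      vDL k a b = fderiv ℝ (fun x => Lhat x b) a (v k a))
    (g ω w' : ℝ → Fin n → ℝ)
    (hg : ∀ (t : ℝ) (i : Fin n),
      HasDerivAt (fun s => g s i) (∑ k, ω t k * v k (g t) i) t)
    (hw' : ∀ (t : ℝ) (k : Fin n), HasDerivAt (fun s => w (g s) k) (w' t k) t)
    (hPoincare : ∀ (k : Fin n) (t : ℝ),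
      HasDerivAt (fun s => Lom k (g s) (ω s))
        ((∑ i, ∑ j, c i k j * ω t i * Lom j (g t) (ω t)) + vDL k (g t) (ω t)) t)
    (hInvariance : ∀ t : ℝ,
      0 = (∑ j, w (g t) j * vDL j (g t) (ω t)) +
          ∑ k, Lom k (g t) (ω t) *
            ((∑ i, ∑ j, c i j k * ω t i * w (g t) j) + w' t k)) :
    ∀ t s : ℝ,
      ∑ k, Lom k (g t) (ω t) * w (g t) k = ∑ k, Lom k (g s) (ω s) * w (g s) k := by
  have key : ∀ t : ℝ, HasDerivAt (fun s => ∑ k, Lom k (g s) (ω s) * w (g s) k) 0 t := by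
    intro t
    have h1 : HasDerivAt (fun s => ∑ k, Lom k (g s) (ω s) * w (g s) k)
        (∑ k, (((∑ i, ∑ j, c i k j * ω t i * Lom j (g t) (ω t)) + vDL k (g t) (ω t)) * w (g t) k
          + Lom k (g t) (ω t) * w' t k)) t :=
      HasDerivAt.fun_sum fun k _ => (hPoincare k t).mul (hw' t k)
    convert h1 using 1
    have hinv := hInvariance t
    have swap : ∑ k, (∑ i, ∑ j, c i k j * ω t i * Lom j (g t) (ω t)) * w (g t) k
        = ∑ k, Lom k (g t) (ω t) * (∑ i, ∑ j, c i j k * ω t i * w (g t) j) := by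
      simp only [Finset.sum_mul, Finset.mul_sum]
      rw [triple_sum_rotate (fun i k j =>
        c i k j * ω t i * Lom j (g t) (ω t) * w (g t) k)]
      refine Finset.sum_congr rfl fun k _ => Finset.sum_congr rfl fun i _ =>
          Finset.sum_congr rfl fun j _ => by ring
    have comm1 : ∑ k, vDL k (g t) (ω t) * w (g t) k
        = ∑ k, w (g t) k * vDL k (g t) (ω t) :=
      Finset.sum_congr rfl fun k _ => mul_comm _ _
    simp only [add_mul, mul_add, Finset.sum_add_distrib] at hinv ⊢
    rw [swap, comm1]
    linarith [hinv]
  intro t s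
  exact is_const_of_deriv_eq_zero (fun x => (key x).differentiableAt)
    (fun x => (key x).deriv) t s
end
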